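/- In the decomposition P = X_g + μ·D₀ + λ·X_𝔥 of a planar quasi-homogeneous vector field P of type t̂ and degree k (with 𝔥 ≠ 0 quasi-homogeneous of degree r+|t̂|), the components are given explicitly by: g = (1/(k+|t̂|))·Proj_{Δ̂}(D₀ ∧ P), λ = (1/((r+|t̂|)𝔥))·Proj_{𝔥𝒫^{t̂}_{k−r}}(D₀ ∧ P), and μ = (1/(k+|t̂|))·(div(P) − ∇λ·X_𝔥). -/

import Mathlib

/-!
Everything reduces to Euler's identity `∇f · D₀ = m f` for a quasi-homogeneous `f` of degree `m`.
Substituting the decomposition, `D₀ ∧ X_f = ∇f · D₀` and `D₀ ∧ D₀ = 0` give the wedge formula,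
while `div X_f = 0` (symmetry of mixed partials) and `div (μ D₀) = ∇μ · D₀ + |t̂| μ` give the
divergence formula. Euler's identity is Mathlib's weighted one, after the scaling condition
defining `IsQH` is turned into weighted homogeneity by comparing coefficients at `ε = 2`.
-/

open MvPolynomial

def IsQH (t : Fin 2 → ℕ) (k : ℕ) (f : MvPolynomial (Fin 2) ℝ) : Prop :=
  ∀ (ε : ℝ) (x : Fin 2 → ℝ),
    eval (fun i => ε ^ t i * x i) f = ε ^ k * eval x f

def IsQHVF (t : Fin 2 → ℕ) (k : ℕ) (F : Fin 2 → MvPolynomial (Fin 2) ℝ) : Prop :=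
  ∀ j, IsQH t (k + t j) (F j)

noncomputable def ham (h : MvPolynomial (Fin 2) ℝ) : Fin 2 → MvPolynomial (Fin 2) ℝ :=
  ![-(pderiv 1 h), pderiv 0 h]

noncomputable def D0 (t : Fin 2 → ℕ) : Fin 2 → MvPolynomial (Fin 2) ℝ :=
  ![C ((t 0 : ℝ)) * X 0, C ((t 1 : ℝ)) * X 1]

noncomputable def wedge (F G : Fin 2 → MvPolynomial (Fin 2) ℝ) : MvPolynomial (Fin 2) ℝ :=
  F 0 * G 1 - F 1 * G 0

noncomputable def divg (F : Fin 2 → MvPolynomial (Fin 2) ℝ) : MvPolynomial (Fin 2) ℝ :=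
  pderiv 0 (F 0) + pderiv 1 (F 1)

namespace MvPolynomial

variable {σ R : Type*}

theorem coeff_aeval_C_pow_mul_X [CommSemiring R] (ε : R) (w : σ → ℕ) (d : σ →₀ ℕ)
    (f : MvPolynomial σ R) :
    coeff d (aeval (fun i => C (ε ^ w i) * X i) f) = ε ^ Finsupp.weight w d * coeff d f := by
  classical
  induction f using MvPolynomial.induction_on' with
  | add p q hp hq => simp only [map_add, coeff_add, hp, hq, mul_add]
  | monomial e c =>
    have : aeval (fun i => C (ε ^ w i) * X i) (monomial e c) =
        monomial e (ε ^ Finsupp.weight w e * c) := by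
      rw [aeval_monomial, monomial_eq, Finsupp.weight_apply, Finsupp.sum,
        ← Finset.prod_pow_eq_pow_sum]
      simp only [mul_pow, ← map_pow, ← pow_mul, Finsupp.prod, Finset.prod_mul_distrib, ← map_prod,
        algebraMap_eq, map_mul, smul_eq_mul, mul_comm (w _)]
      ring
    rw [this, coeff_monomial, coeff_monomial]
    split_ifs with h
    · rw [h]
    · simp

theorem isWeightedHomogeneous_of_forall_eval_pow_mul [Field R] [LinearOrder R]
    [IsStrictOrderedRing R] {w : σ → ℕ} {m : ℕ} {f : MvPolynomial σ R}
    (hf : ∀ (ε : R) (x : σ → R), eval (fun i => ε ^ w i * x i) f = ε ^ m * eval x f) :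
    f.IsWeightedHomogeneous w m := by
  have hscale : aeval (fun i => C ((2 : R) ^ w i) * X i) f = C (2 ^ m) * f := by
    refine MvPolynomial.funext fun x => ?_
    rw [aeval_eq_bind₁, eval, eval₂Hom_bind₁]
    simp only [map_mul, eval₂Hom_C, eval₂Hom_X', RingHom.id_apply]
    exact hf 2 x
  intro d hd
  have hcoeff := congrArg (coeff d) hscale
  rw [coeff_aeval_C_pow_mul_X, coeff_C_mul, mul_left_inj' hd] at hcoeff
  exact pow_right_injective₀ two_pos (by norm_num) hcoeff

theorem pderiv_pderiv_comm [CommRing R] (i j : σ) (f : MvPolynomial σ R) :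
    pderiv i (pderiv j f) = pderiv j (pderiv i f) := by
  classical
  -- `⁅∂ᵢ, ∂ⱼ⁆` is again a derivation, so it suffices that it kills every variable.
  have hbracket : ⁅pderiv i, pderiv j⁆ = (0 : Derivation R (MvPolynomial σ R) (MvPolynomial σ R)) :=
    derivation_ext fun k => by
      rw [Derivation.commutator_apply, pderiv_X, pderiv_X, Pi.single_apply, Pi.single_apply]
      split_ifs <;> simp
  simpa only [Derivation.commutator_apply, Derivation.zero_apply, sub_eq_zero] using
    congrArg (· f) hbracket

end MvPolynomial

theorem wedge_self (F : Fin 2 → MvPolynomial (Fin 2) ℝ) : wedge F F = 0 := by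
  simp only [wedge]
  ring

theorem wedge_add_right (F G H : Fin 2 → MvPolynomial (Fin 2) ℝ) :
    wedge F (G + H) = wedge F G + wedge F H := by
  simp only [wedge, Pi.add_apply]
  ring

theorem wedge_smul_right (F G : Fin 2 → MvPolynomial (Fin 2) ℝ) (p : MvPolynomial (Fin 2) ℝ) :
    wedge F (p • G) = p * wedge F G := by
  simp only [wedge, Pi.smul_apply, smul_eq_mul]
  ring

theorem divg_add (F G : Fin 2 → MvPolynomial (Fin 2) ℝ) : divg (F + G) = divg F + divg G := by
  simp only [divg, Pi.add_apply, map_add]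
  ring

theorem divg_smul (p : MvPolynomial (Fin 2) ℝ) (F : Fin 2 → MvPolynomial (Fin 2) ℝ) :
    divg (p • F) = ∑ i, pderiv i p * F i + p * divg F := by
  simp only [divg, Pi.smul_apply, smul_eq_mul, Derivation.leibniz, Fin.sum_univ_two]
  ring

theorem divg_ham (h : MvPolynomial (Fin 2) ℝ) : divg (ham h) = 0 := by
  simp only [divg, ham, Matrix.cons_val_zero, Matrix.cons_val_one, map_neg,
    pderiv_pderiv_comm 0 1 h, neg_add_cancel]

theorem divg_D0 (t : Fin 2 → ℕ) : divg (D0 t) = C ((t 0 : ℝ) + t 1) := by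
  simp only [divg, D0, Matrix.cons_val_zero, Matrix.cons_val_one,
    pderiv_C_mul, pderiv_X_self, map_add, mul_one]

section QuasiHomogeneous

variable {t : Fin 2 → ℕ} {m : ℕ} {f : MvPolynomial (Fin 2) ℝ}

theorem IsQH.isWeightedHomogeneous (hf : IsQH t m f) : f.IsWeightedHomogeneous t m :=
  isWeightedHomogeneous_of_forall_eval_pow_mul hf

theorem IsQH.sum_pderiv_mul_D0 (hf : IsQH t m f) :
    ∑ i, pderiv i f * D0 t i = C (m : ℝ) * f := by
  have euler := hf.isWeightedHomogeneous.sum_weight_X_mul_pderiv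
  simp only [Fin.sum_univ_two, nsmul_eq_mul, ← map_natCast C] at euler
  simp only [Fin.sum_univ_two, D0, Matrix.cons_val_zero, Matrix.cons_val_one]
  linear_combination euler

theorem IsQH.wedge_D0_ham (hf : IsQH t m f) : wedge (D0 t) (ham f) = C (m : ℝ) * f := by
  rw [← hf.sum_pderiv_mul_D0]
  simp only [wedge, ham, Fin.sum_univ_two, Matrix.cons_val_zero, Matrix.cons_val_one]
  ring

theorem IsQH.divg_smul_D0 (hf : IsQH t m f) :
    divg (f • D0 t) = C ((m + t 0 + t 1 : ℕ) : ℝ) * f := by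
  rw [divg_smul, hf.sum_pderiv_mul_D0, divg_D0]
  simp only [Nat.cast_add, map_add]
  ring

end QuasiHomogeneous

theorem planar_splitting_formulas_general (t : Fin 2 → ℕ) (r k : ℕ)
    (𝔥 : MvPolynomial (Fin 2) ℝ) (h𝔥 : IsQH t (r + t 0 + t 1) 𝔥)
    (Δ : Submodule ℝ (MvPolynomial (Fin 2) ℝ))
    (hΔQH : ∀ g ∈ Δ, IsQH t (k + t 0 + t 1) g)
    (P : Fin 2 → MvPolynomial (Fin 2) ℝ)
    (g μ lam : MvPolynomial (Fin 2) ℝ)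
    (hg : g ∈ Δ) (hμ : IsQH t k μ)
    (hdec : ∀ j, P j = ham g j + μ * D0 t j + lam * ham 𝔥 j) :
    wedge (D0 t) P =
        C (((k + t 0 + t 1 : ℕ) : ℝ)) * g + C (((r + t 0 + t 1 : ℕ) : ℝ)) * (lam * 𝔥) ∧
    C (((k + t 0 + t 1 : ℕ) : ℝ)) * μ = divg P - ∑ i, pderiv i lam * ham 𝔥 i := by
  have hP : P = ham g + μ • D0 t + lam • ham 𝔥 := funext hdec
  subst hP
  constructor
  · rw [wedge_add_right, wedge_add_right, wedge_smul_right, wedge_smul_right, wedge_self,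
      (hΔQH g hg).wedge_D0_ham, h𝔥.wedge_D0_ham]
    ring
  · rw [divg_add, divg_add, divg_ham, hμ.divg_smul_D0, divg_smul, divg_ham]
    ring

/-- Explicit formulas for the components of the planar splitting
`P = X_g + μ·D₀ + λ·X_𝔥`: the `Δ̂`-component of `D₀ ∧ P` is `(k+|t̂|)·g`, its
`𝔥𝒫`-component is `(r+|t̂|)·λ·𝔥`, and `(k+|t̂|)·μ = div(P) − ∇λ·X_𝔥`. -/
theorem planar_splitting_formulas (t : Fin 2 → ℕ) (ht : ∀ i, 0 < t i) (r k : ℕ)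
    (hrk : r ≤ k)
    (𝔥 : MvPolynomial (Fin 2) ℝ) (h𝔥 : IsQH t (r + t 0 + t 1) 𝔥) (h𝔥0 : 𝔥 ≠ 0)
    (Δ : Submodule ℝ (MvPolynomial (Fin 2) ℝ))
    (hΔQH : ∀ g ∈ Δ, IsQH t (k + t 0 + t 1) g)
    (P : Fin 2 → MvPolynomial (Fin 2) ℝ) (hP : IsQHVF t k P)
    (g μ lam : MvPolynomial (Fin 2) ℝ)
    (hg : g ∈ Δ) (hμ : IsQH t k μ) (hlam : IsQH t (k - r) lam)
    (hdec : ∀ j, P j = ham g j + μ * D0 t j + lam * ham 𝔥 j) :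
    wedge (D0 t) P =
        C (((k + t 0 + t 1 : ℕ) : ℝ)) * g + C (((r + t 0 + t 1 : ℕ) : ℝ)) * (lam * 𝔥) ∧
    C (((k + t 0 + t 1 : ℕ) : ℝ)) * μ = divg P - ∑ i, pderiv i lam * ham 𝔥 i :=
  planar_splitting_formulas_general t r k 𝔥 h𝔥 Δ hΔQH P g μ lam hg hμ hdec
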